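/- arXiv:1105.0319 — 4 statements merged into one kernel-verified Lean document; each statement's English description precedes it below -/
import Mathlib

section
/- Let S be a finite set, n a positive integer, and h : S^n → [0,1]. Suppose there exists λ ∈ (0,1) such that for every probability distribution q on S, the expectation of h under the i.i.d. product measure q^n satisfies ∑_{s ∈ S^n} h(s) q^n(s) ≥ 1 − λ. Then for every sequence s ∈ S^n, the average of h over all permutations of the coordinates satisfies (1/n!) ∑_{π ∈ S_n} h(π(s)) ≥ 1 − (n+1)^{|S|} λ. -/
open Finset

section
variable {S : Type} [Fintype S] [DecidableEq S] {n : ℕ}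

def cnt (s : Fin n → S) (a : S) : ℕ := #{i | s i = a}

lemma cnt_sum (s : Fin n → S) : ∑ a, cnt s a = n := by
  have := Finset.card_eq_sum_card_fiberwise (f := s) (s := (univ : Finset (Fin n)))
    (t := univ) (fun x _ => mem_univ _)
  simpa [cnt] using this.symm

end

section
variable {S : Type} [Fintype S] [DecidableEq S] {n : ℕ}

lemma stab_card_le (s : Fin n → S) :
    Fintype.card {π : Equiv.Perm (Fin n) // ∀ i, s (π i) = s i} ≤
      ∏ a, (cnt s a).factorial := by
  have hΦ : Function.Injective
      (fun (π : {π : Equiv.Perm (Fin n) // ∀ i, s (π i) = s i}) =>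
        (fun a : S =>
          ({ toFun := fun x => ⟨π.1 x.1, by rw [π.2]; exact x.2⟩
             invFun := fun x => ⟨π.1⁻¹ x.1, by
               rw [show s (π.1⁻¹ x.1) = s (π.1 (π.1⁻¹ x.1)) from (π.2 _).symm]
               simpa using x.2⟩
             left_inv := fun x => by simp
             right_inv := fun x => by simp } : Equiv.Perm {i : Fin n // s i = a}))) := by
    intro π π' hpp
    apply Subtype.ext; apply Equiv.ext; intro i
    have := congr_fun hpp (s i)
    have := congr_arg (fun (e : Equiv.Perm {j : Fin n // s j = s i}) => (e ⟨i, rfl⟩).1) this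
    simpa using this
  calc Fintype.card {π : Equiv.Perm (Fin n) // ∀ i, s (π i) = s i}
      ≤ Fintype.card (∀ a : S, Equiv.Perm {i : Fin n // s i = a}) :=
        Fintype.card_le_of_injective _ hΦ
    _ = ∏ a, (cnt s a).factorial := by
        rw [Fintype.card_pi]
        refine Finset.prod_congr rfl fun a _ => ?_
        rw [Fintype.card_perm, Fintype.card_subtype]
        rfl

end

section
variable {S : Type} [Fintype S] [DecidableEq S] {n : ℕ}

lemma fiber_card_eq (s t : Fin n → S) (σ : Equiv.Perm (Fin n))
    (hσ : (fun i => s (σ i)) = t) :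
    #{π : Equiv.Perm (Fin n) | (fun i => s (π i)) = t} =
      #{π : Equiv.Perm (Fin n) | (fun i => s (π i)) = s} := by
  refine Finset.card_bij' (fun ρ _ => ρ * σ⁻¹) (fun π _ => π * σ) ?_ ?_ ?_ ?_
  · intro ρ hρ
    simp only [mem_filter, mem_univ, true_and] at hρ ⊢
    funext i
    have h1 : s (ρ (σ⁻¹ i)) = t (σ⁻¹ i) := congr_fun hρ (σ⁻¹ i)
    have h2 : t (σ⁻¹ i) = s (σ (σ⁻¹ i)) := (congr_fun hσ (σ⁻¹ i)).symm
    simpa [Equiv.Perm.mul_apply] using h1.trans (h2.trans (by simp))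
  · intro π hπ
    simp only [mem_filter, mem_univ, true_and] at hπ ⊢
    funext i
    have h1 : s (π (σ i)) = s (σ i) := congr_fun hπ (σ i)
    simpa [Equiv.Perm.mul_apply] using h1.trans (congr_fun hσ i)
  · intro ρ _; simp [mul_assoc]
  · intro π _; simp [mul_assoc]

end

section
variable {S : Type} [Fintype S] [DecidableEq S] {n : ℕ}

lemma factorial_eq_card_mul (s : Fin n → S) :
    n.factorial = (univ.image (fun π : Equiv.Perm (Fin n) => fun i => s (π i))).card *
      #{π : Equiv.Perm (Fin n) | (fun i => s (π i)) = s} := by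
  have h1 : (univ : Finset (Equiv.Perm (Fin n))).card = n.factorial := by
    simp [Fintype.card_perm]
  rw [← h1, Finset.card_eq_sum_card_image (fun π : Equiv.Perm (Fin n) => fun i => s (π i)) univ]
  rw [Finset.sum_congr rfl (fun t ht => ?_), Finset.sum_const, smul_eq_mul]
  obtain ⟨σ, _, hσ⟩ := Finset.mem_image.mp ht
  exact fiber_card_eq s t σ hσ

lemma stab_filter_card_le (s : Fin n → S) :
    #{π : Equiv.Perm (Fin n) | (fun i => s (π i)) = s} ≤ ∏ a, (cnt s a).factorial := by
  refine le_trans (le_of_eq ?_) (stab_card_le s)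
  rw [Fintype.card_subtype]
  congr 1
  apply Finset.filter_congr
  intro π _
  simp [funext_iff]

lemma multinomial_le_card (s : Fin n → S) :
    Nat.multinomial univ (cnt s) ≤
      (univ.image (fun π : Equiv.Perm (Fin n) => fun i => s (π i))).card := by
  have hspec := Nat.multinomial_spec (univ : Finset S) (cnt s)
  rw [cnt_sum s] at hspec
  have hpos : 0 < ∏ a, (cnt s a).factorial :=
    Finset.prod_pos fun a _ => Nat.factorial_pos _
  refine Nat.le_of_mul_le_mul_left ?_ hpos
  calc (∏ a, (cnt s a).factorial) * Nat.multinomial univ (cnt s) = n.factorial := hspec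
    _ = (univ.image (fun π : Equiv.Perm (Fin n) => fun i => s (π i))).card *
        #{π : Equiv.Perm (Fin n) | (fun i => s (π i)) = s} := factorial_eq_card_mul s
    _ ≤ (univ.image (fun π : Equiv.Perm (Fin n) => fun i => s (π i))).card *
        ∏ a, (cnt s a).factorial := Nat.mul_le_mul_left _ (stab_filter_card_le s)
    _ = (∏ a, (cnt s a).factorial) *
        (univ.image (fun π : Equiv.Perm (Fin n) => fun i => s (π i))).card := mul_comm _ _

end

section
variable {S : Type} [Fintype S] [DecidableEq S] {n : ℕ}

lemma aux1' (m d : ℕ) : (m + d).factorial ≤ m.factorial * (m + d) ^ d := by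
  induction d with
  | zero => simp
  | succ d ih =>
      calc (m + (d+1)).factorial = (m + d + 1) * (m + d).factorial := by
            rw [show m + (d+1) = (m + d) + 1 from rfl, Nat.factorial_succ]
        _ ≤ (m + d + 1) * (m.factorial * (m + d) ^ d) := Nat.mul_le_mul_left _ ih
        _ ≤ (m + d + 1) * (m.factorial * (m + d + 1) ^ d) :=
            Nat.mul_le_mul_left _ (Nat.mul_le_mul_left _ (Nat.pow_le_pow_left (by omega) d))
        _ = m.factorial * (m + (d+1)) ^ (d+1) := by ring_nf

lemma aux2' (m d : ℕ) : m.factorial * m ^ d ≤ (m + d).factorial := by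
  induction d with
  | zero => simp
  | succ d ih =>
      calc m.factorial * m ^ (d+1) = (m.factorial * m ^ d) * m := by ring
        _ ≤ (m + d).factorial * (m + d + 1) := Nat.mul_le_mul ih (by omega)
        _ = (m + (d+1)).factorial := by
            rw [show m + (d+1) = (m+d)+1 from rfl, Nat.factorial_succ]; ring

lemma fact_pow_le (N M : ℕ) : N.factorial * N ^ M ≤ M.factorial * N ^ N := by
  rcases le_total M N with hMN | hNM
  · obtain ⟨d, rfl⟩ := Nat.exists_eq_add_of_le hMN
    calc (M + d).factorial * (M + d) ^ M ≤ (M.factorial * (M + d) ^ d) * (M + d) ^ M :=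
          Nat.mul_le_mul_right _ (aux1' M d)
      _ = M.factorial * (M + d) ^ (M + d) := by rw [mul_assoc, ← pow_add]; ring_nf
  · obtain ⟨d, rfl⟩ := Nat.exists_eq_add_of_le hNM
    calc N.factorial * N ^ (N + d) = (N.factorial * N ^ d) * N ^ N := by rw [mul_assoc, ← pow_add]; ring_nf
      _ ≤ (N + d).factorial * N ^ N := Nat.mul_le_mul_right _ (aux2' N d)

lemma term_le (N M : S → ℕ) (hM : ∑ a, M a = n) (hN : ∑ a, N a = n) :
    Nat.multinomial univ M * ∏ a, N a ^ M a ≤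
      Nat.multinomial univ N * ∏ a, N a ^ N a := by
  have hP : 0 < ∏ a, (M a).factorial := Finset.prod_pos fun a _ => Nat.factorial_pos _
  have hQ : 0 < ∏ a, (N a).factorial := Finset.prod_pos fun a _ => Nat.factorial_pos _
  have hMs := Nat.multinomial_spec (univ : Finset S) M
  have hNs := Nat.multinomial_spec (univ : Finset S) N
  rw [hM] at hMs; rw [hN] at hNs
  have key : (∏ a, (N a).factorial) * ∏ a, N a ^ M a ≤
      (∏ a, (M a).factorial) * ∏ a, N a ^ N a := by
    rw [← Finset.prod_mul_distrib, ← Finset.prod_mul_distrib]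
    exact Finset.prod_le_prod' fun a _ => fact_pow_le (N a) (M a)
  refine Nat.le_of_mul_le_mul_left ?_ (Nat.mul_pos hP hQ)
  calc (∏ a, (M a).factorial) * (∏ a, (N a).factorial) *
        (Nat.multinomial univ M * ∏ a, N a ^ M a)
      = ((∏ a, (M a).factorial) * Nat.multinomial univ M) *
        ((∏ a, (N a).factorial) * ∏ a, N a ^ M a) := by ring
    _ = n.factorial * ((∏ a, (N a).factorial) * ∏ a, N a ^ M a) := by rw [hMs]
    _ ≤ n.factorial * ((∏ a, (M a).factorial) * ∏ a, N a ^ N a) :=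
        Nat.mul_le_mul_left _ key
    _ = ((∏ a, (N a).factorial) * Nat.multinomial univ N) *
        ((∏ a, (M a).factorial) * ∏ a, N a ^ N a) := by rw [hNs]
    _ = (∏ a, (M a).factorial) * (∏ a, (N a).factorial) *
        (Nat.multinomial univ N * ∏ a, N a ^ N a) := by ring

lemma piAntidiag_card_le :
    (Finset.piAntidiag (univ : Finset S) n).card ≤ (n + 1) ^ (Fintype.card S) := by
  have : (Finset.piAntidiag (univ : Finset S) n).card ≤
      (univ : Finset (S → Fin (n+1))).card := by
    refine Finset.card_le_card_of_injOn
      (fun M a => (⟨min (M a) n, by omega⟩ : Fin (n+1))) (fun _ _ => mem_univ _) ?_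
    intro M hM M' hM' hMM'
    have hM1 := (Finset.mem_piAntidiag.mp hM).1
    have hM2 := (Finset.mem_piAntidiag.mp hM').1
    funext a
    have h1 : M a ≤ n := hM1 ▸ Finset.single_le_sum (fun a _ => Nat.zero_le (M a)) (mem_univ a)
    have h2 : M' a ≤ n := hM2 ▸ Finset.single_le_sum (fun a _ => Nat.zero_le (M' a)) (mem_univ a)
    have := congr_fun hMM' a
    simp only [Fin.mk.injEq] at this
    omega
  simpa [Finset.card_univ] using this

lemma types_bound (s : Fin n → S) :
    n ^ n ≤ (n + 1) ^ (Fintype.card S) *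
      ((univ.image (fun π : Equiv.Perm (Fin n) => fun i => s (π i))).card *
        ∏ a, (cnt s a) ^ (cnt s a)) := by
  have hmt : n ^ n = ∑ M ∈ Finset.piAntidiag (univ : Finset S) n,
      Nat.multinomial univ M * ∏ a, (cnt s a) ^ M a := by
    have := Finset.sum_pow_eq_sum_piAntidiag (univ : Finset S) (fun a => cnt s a) n
    simpa [cnt_sum s] using this
  rw [hmt]
  calc ∑ M ∈ Finset.piAntidiag (univ : Finset S) n,
        Nat.multinomial univ M * ∏ a, (cnt s a) ^ M a
      ≤ ∑ _M ∈ Finset.piAntidiag (univ : Finset S) n,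
        ((univ.image (fun π : Equiv.Perm (Fin n) => fun i => s (π i))).card *
          ∏ a, (cnt s a) ^ (cnt s a)) := by
        refine Finset.sum_le_sum fun M hM => ?_
        refine le_trans (term_le (cnt s) M (Finset.mem_piAntidiag.mp hM).1 (cnt_sum s)) ?_
        exact Nat.mul_le_mul_right _ (multinomial_le_card s)
    _ = (Finset.piAntidiag (univ : Finset S) n).card *
        ((univ.image (fun π : Equiv.Perm (Fin n) => fun i => s (π i))).card *
          ∏ a, (cnt s a) ^ (cnt s a)) := by rw [Finset.sum_const, smul_eq_mul]
    _ ≤ (n + 1) ^ (Fintype.card S) *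
        ((univ.image (fun π : Equiv.Perm (Fin n) => fun i => s (π i))).card *
          ∏ a, (cnt s a) ^ (cnt s a)) := Nat.mul_le_mul_right _ piAntidiag_card_le

end


/-- Ahlswede's robustification lemma. -/
theorem robustification
    {S : Type} [Fintype S] [Nonempty S] (n : ℕ) (hn : 0 < n)
    (h : (Fin n → S) → ℝ) (hh : ∀ s, h s ∈ Set.Icc (0:ℝ) 1)
    (lam : ℝ) (hlam : lam ∈ Set.Ioo (0:ℝ) 1)
    (hcomp : ∀ q : S → ℝ, (∀ a, 0 ≤ q a) → (∑ a, q a = 1) →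
      1 - lam ≤ ∑ s : Fin n → S, h s * ∏ i, q (s i)) :
    ∀ s : Fin n → S,
      1 - (n + 1 : ℝ) ^ (Fintype.card S) * lam ≤
        (1 / (n.factorial : ℝ)) *
          ∑ π : Equiv.Perm (Fin n), h (fun i => s (π i)) := by
  haveI : DecidableEq S := Classical.decEq S
  intro s
  obtain ⟨hlam0, hlam1⟩ := hlam
  have hn' : (0:ℝ) < n := by exact_mod_cast hn
  set T : Finset (Fin n → S) :=
    univ.image (fun π : Equiv.Perm (Fin n) => fun i => s (π i)) with hT
  set k : ℕ := #{π : Equiv.Perm (Fin n) | (fun i => s (π i)) = s} with hk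
  set N : S → ℕ := cnt s with hN
  set q : S → ℝ := fun a => (N a : ℝ) / n with hq
  have hq0 : ∀ a, 0 ≤ q a := fun a => by positivity
  have hqs : ∑ a, q a = 1 := by
    rw [hq]
    rw [← Finset.sum_div]
    rw [show ∑ a, (N a:ℝ) = ((∑ a, N a : ℕ) : ℝ) by push_cast; ring]
    rw [hN, cnt_sum s]
    field_simp
  set c : ℝ := ∏ i, q (s i) with hc
  have hc0 : 0 ≤ c := Finset.prod_nonneg fun i _ => hq0 _
  have hw0 : ∀ t : Fin n → S, 0 ≤ ∏ i, q (t i) :=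
    fun t => Finset.prod_nonneg fun i _ => hq0 _
  have hwconst : ∀ t ∈ T, (∏ i, q (t i)) = c := by
    intro t ht
    obtain ⟨σ, _, hσ⟩ := Finset.mem_image.mp ht
    rw [← hσ, hc]
    exact Equiv.prod_comp σ (fun i => q (s i))
  have hsum1 : ∑ t : Fin n → S, ∏ i, q (t i) = 1 := by
    have := Finset.prod_univ_sum (fun _ : Fin n => (univ : Finset S)) (fun _ a => q a)
    rw [Fintype.piFinset_univ] at this
    rw [← this, hqs]
    simp
  have hc_eq : c = (∏ a, (N a:ℝ) ^ (N a)) / (n:ℝ) ^ n := by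
    have h1 : c = ∏ a, q a ^ N a := by
      rw [hc, ← Finset.prod_fiberwise (univ : Finset (Fin n)) s (fun i => q (s i))]
      refine Finset.prod_congr rfl fun a _ => ?_
      rw [Finset.prod_congr rfl (fun i hi => ?_), Finset.prod_const]
      · rfl
      · rw [(Finset.mem_filter.mp hi).2]
    rw [h1, hq]
    rw [show (∏ a, ((N a:ℝ)/n) ^ N a) = (∏ a, (N a:ℝ)^(N a)) / ∏ a, (n:ℝ)^(N a) by
      rw [← Finset.prod_div_distrib]; exact Finset.prod_congr rfl fun a _ => div_pow _ _ _]
    congr 1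
    rw [Finset.prod_pow_eq_pow_sum, hN, cnt_sum s]
  set K : ℝ := (n + 1 : ℝ) ^ (Fintype.card S) with hK
  have hKpos : 0 < K := by positivity
  have hKW : 1 ≤ K * ((T.card : ℝ) * c) := by
    have hcast : ((n:ℝ)) ^ n ≤ K * ((T.card:ℝ) * ∏ a, (N a:ℝ) ^ (N a)) := by
      have htb := types_bound s
      calc ((n:ℝ))^n = ((n^n : ℕ) : ℝ) := by push_cast; ring
        _ ≤ (((n+1) ^ (Fintype.card S) *
            ((univ.image (fun π : Equiv.Perm (Fin n) => fun i => s (π i))).card *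
              ∏ a, (cnt s a) ^ (cnt s a)) : ℕ) : ℝ) := by exact_mod_cast htb
        _ = K * ((T.card:ℝ) * ∏ a, (N a:ℝ) ^ (N a)) := by push_cast [hK, hT, hN]; ring
    have hpow : (0:ℝ) < (n:ℝ) ^ n := by positivity
    have heq : K * ((T.card:ℝ) * c) = (K * ((T.card:ℝ) * ∏ a, (N a:ℝ) ^ (N a))) / (n:ℝ)^n := by
      rw [hc_eq]; ring
    rw [heq, le_div_iff₀ hpow, one_mul]
    exact hcast
  have hTc_pos : 0 < (T.card : ℝ) * c := by
    rcases lt_or_eq_of_le (mul_nonneg (show (0:ℝ) ≤ (T.card:ℝ) by positivity) hc0) with h' | h'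
    · exact h'
    · exfalso; rw [← h'] at hKW; simp at hKW; linarith
  have hcpos : 0 < c := by
    rcases lt_or_eq_of_le hc0 with h' | h'
    · exact h'
    · exfalso; rw [← h'] at hTc_pos; simp at hTc_pos
  have hTpos : 0 < (T.card : ℝ) := by nlinarith
  have hTw : ∑ t ∈ T, ∏ i, q (t i) = (T.card : ℝ) * c := by
    rw [Finset.sum_congr rfl hwconst, Finset.sum_const, nsmul_eq_mul]
  have hsplit : ∑ t ∈ univ \ T, (h t * ∏ i, q (t i)) + ∑ t ∈ T, (h t * ∏ i, q (t i))
      = ∑ t : Fin n → S, h t * ∏ i, q (t i) :=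
    Finset.sum_sdiff (Finset.subset_univ T)
  have hwsplit : ∑ t ∈ univ \ T, (∏ i, q (t i)) + ∑ t ∈ T, (∏ i, q (t i))
      = ∑ t : Fin n → S, ∏ i, q (t i) :=
    Finset.sum_sdiff (Finset.subset_univ T)
  have hcompl : ∑ t ∈ univ \ T, (h t * ∏ i, q (t i)) ≤ ∑ t ∈ univ \ T, ∏ i, q (t i) := by
    refine Finset.sum_le_sum fun t _ => ?_
    nlinarith [hw0 t, (hh t).1, (hh t).2]
  have h1 := hcomp q hq0 hqs
  have hTlower : (T.card : ℝ) * c - lam ≤ ∑ t ∈ T, (h t * ∏ i, q (t i)) := by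
    linarith [hcompl, hsplit, hwsplit, hTw, hsum1]
  have hTsum_h : ∑ t ∈ T, (h t * ∏ i, q (t i)) = c * ∑ t ∈ T, h t := by
    rw [Finset.mul_sum]
    refine Finset.sum_congr rfl fun t ht => ?_
    rw [hwconst t ht]; ring
  have hfact : (n.factorial : ℝ) = (T.card : ℝ) * (k : ℝ) := by
    exact_mod_cast factorial_eq_card_mul s
  have hperm : (∑ π : Equiv.Perm (Fin n), h (fun i => s (π i))) = (k:ℝ) * ∑ t ∈ T, h t := by
    rw [Finset.sum_comp h (fun π : Equiv.Perm (Fin n) => fun i => s (π i)), Finset.mul_sum]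
    refine Finset.sum_congr rfl fun t ht => ?_
    obtain ⟨σ, _, hσ⟩ := Finset.mem_image.mp ht
    rw [show #{π : Equiv.Perm (Fin n) | (fun i => s (π i)) = t} = k from fiber_card_eq s t σ hσ]
    rw [nsmul_eq_mul]
  have hkpos : 0 < (k:ℝ) := by
    have hf : 0 < (n.factorial : ℝ) := by exact_mod_cast n.factorial_pos
    nlinarith
  have hgoal : (T.card : ℝ) * (1 - K * lam) ≤ ∑ t ∈ T, h t := by
    have h2 : c * ∑ t ∈ T, h t ≥ (T.card : ℝ) * c - lam := by
      rw [← hTsum_h]; exact hTlower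
    have h3 : lam ≤ lam * (K * ((T.card:ℝ) * c)) := le_mul_of_one_le_right (le_of_lt hlam0) hKW
    have h4 : c * ((T.card : ℝ) * (1 - K * lam)) ≤ c * ∑ t ∈ T, h t := by nlinarith
    exact le_of_mul_le_mul_left h4 hcpos
  rw [hperm, hfact, one_div_mul_eq_div, le_div_iff₀ (mul_pos hTpos hkpos)]
  have hfin := mul_le_mul_of_nonneg_right hgoal (le_of_lt hkpos)
  linarith [hfin]
end

section
/- Let W : X × Y × S → P(Z) be a family of channels over finite alphabets X, Y, Z, S. If W is X-symmetrizable via σ_1 and Y-symmetrizable via σ_2, it does not follow that W is (X,Y)-symmetrizable; concretely, for X = Y = S = {0,1}, Z = {0,1,2,3}, and W(z|x,y|s) = δ(z − x − y − s) (the deterministic channel z = x + y + s over the integers), W is both X-symmetrizable and Y-symmetrizable but not (X,Y)-symmetrizable. -/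
open Finset

/-- `(X,Y)`-symmetrizability of a family of channels `W`. -/
def XYSymmetrizable {X Y Z S : Type} [Fintype S]
    (W : Z → X → Y → S → ℝ) : Prop :=
  ∃ σ : X → Y → S → ℝ,
    (∀ x y, (∀ s, 0 ≤ σ x y s) ∧ ∑ s, σ x y s = 1) ∧
    ∀ z x x' y y', ∑ s, W z x y s * σ x' y' s = ∑ s, W z x' y' s * σ x y s

/-- `X`-symmetrizability of a family of channels `W`. -/
def XSymmetrizable {X Y Z S : Type} [Fintype S]
    (W : Z → X → Y → S → ℝ) : Prop :=
  ∃ σ₁ : X → S → ℝ,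
    (∀ x, (∀ s, 0 ≤ σ₁ x s) ∧ ∑ s, σ₁ x s = 1) ∧
    ∀ z x x' y, ∑ s, W z x y s * σ₁ x' s = ∑ s, W z x' y s * σ₁ x s

/-- `Y`-symmetrizability of a family of channels `W`. -/
def YSymmetrizable {X Y Z S : Type} [Fintype S]
    (W : Z → X → Y → S → ℝ) : Prop :=
  ∃ σ₂ : Y → S → ℝ,
    (∀ y, (∀ s, 0 ≤ σ₂ y s) ∧ ∑ s, σ₂ y s = 1) ∧
    ∀ z x y y', ∑ s, W z x y s * σ₂ y' s = ∑ s, W z x y' s * σ₂ y s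

/-- Gubner's channel `z = x + y + s`. -/
noncomputable def GubnerW : Fin 4 → Fin 2 → Fin 2 → Fin 2 → ℝ :=
  fun z x y s => if (z : ℕ) = (x : ℕ) + (y : ℕ) + (s : ℕ) then 1 else 0

/-- Gubner's example: a channel that is both `X`- and `Y`-symmetrizable
but not `(X,Y)`-symmetrizable. -/
theorem gubner_example :
    XSymmetrizable GubnerW ∧ YSymmetrizable GubnerW ∧
      ¬ XYSymmetrizable GubnerW := by
  refine ⟨⟨fun x s => if s = x then 1 else 0, ?_, ?_⟩,
          ⟨fun y s => if s = y then 1 else 0, ?_, ?_⟩, ?_⟩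
  · intro x
    constructor
    · intro s; positivity
    · fin_cases x <;> simp [Fin.sum_univ_two]
  · intro z x x' y
    fin_cases z <;> fin_cases x <;> fin_cases x' <;> fin_cases y <;>
      norm_num [GubnerW, Fin.sum_univ_two]
  · intro y
    constructor
    · intro s; positivity
    · fin_cases y <;> simp [Fin.sum_univ_two]
  · intro z x y y'
    fin_cases z <;> fin_cases x <;> fin_cases y <;> fin_cases y' <;>
      norm_num [GubnerW, Fin.sum_univ_two]
  · rintro ⟨σ, hσ, hsym⟩
    have h1 := hsym 2 0 1 0 1
    have h2 := hsym 2 0 1 0 0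
    have h3 := (hσ 0 0).2
    simp only [GubnerW, Fin.sum_univ_two] at h1 h2 h3
    norm_num at h1 h2 h3
    linarith
end

section
/- For the channel W(z|x,y|s) = δ(z − x − y − s) with X = Y = S = {0,1} and Z = {0,1,2,3}, W is not (X,Y)-symmetrizable: there exists no stochastic matrix σ(s|x,y) such that ∑_s W(z|x,y|s)σ(s|x',y') = ∑_s W(z|x',y'|s)σ(s|x,y) for all x,x' ∈ X, y,y' ∈ Y, z ∈ Z. -/
open Finset

/-- Gubner's channel is not `(X,Y)`-symmetrizable. -/
theorem gubner_not_XY_symmetrizable :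
    ¬ ∃ σ : Fin 2 → Fin 2 → Fin 2 → ℝ,
        (∀ x y, (∀ s, 0 ≤ σ x y s) ∧ ∑ s, σ x y s = 1) ∧
        ∀ (z : Fin 4) (x x' y y' : Fin 2),
          ∑ s, GubnerW z x y s * σ x' y' s =
            ∑ s, GubnerW z x' y' s * σ x y s := by
  rintro ⟨σ, hstoch, hsym⟩
  have h1 := hsym 1 0 1 0 1
  have h2 := hsym 1 0 1 1 1
  have hsum := (hstoch 1 1).2
  simp [GubnerW, Fin.sum_univ_two] at h1 h2 hsum
  linarith
end

section
/- Let Γ be a finite set, p_G a probability distribution on Γ, S a finite set, n ≥ 1, and P_e : Γ × S^n → [0,1] a function such that E_{γ∼p_G}[P_e(γ, s)] ≤ λ for all s ∈ S^n, where λ ∈ (0,1). Let G_1,...,G_{n^2} be i.i.d. with distribution p_G. If n is large enough that |S|^n · exp(−(3λ − e·λ) n^2) < 1, then with positive probability, (1/n^2) ∑_{m=1}^{n^2} P_e(G_m, s) ≤ 3λ simultaneously for all s ∈ S^n. Consequently there exist γ_1,...,γ_{n^2} ∈ Γ with (1/n^2) ∑_{m=1}^{n^2} P_e(γ_m, s)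 ≤ 3λ for every s ∈ S^n. -/
/-!
For a fixed state sequence `s`, the errors `Pe (G m) s` are independent `[0,1]`-valued random
variables of mean at most `λ`. Convexity gives `exp x ≤ 1 + (e - 1) x` on `[0,1]`, so each has
moment generating function at most `exp (e λ)` at `1`, and Chernoff's bound yields
`P (∑ m, Pe (G m) s ≥ 3 λ n²) ≤ exp (-(3 λ - e λ) n²)`. By the union bound over the `|S|ⁿ`
sequences `s`, the event on which every average is at most `3 λ` has positive probability, and
any outcome in it provides the codes `γs`.
-/

open Finset MeasureTheory ProbabilityTheory Real

theorem Real.exp_le_one_add_mul_of_mem_Icc {x : ℝ} (hx : x ∈ Set.Icc (0 : ℝ) 1) :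
    exp x ≤ 1 + (exp 1 - 1) * x := by
  have h := convexOn_exp.2 (Set.mem_univ 0) (Set.mem_univ 1) (sub_nonneg.2 hx.2) hx.1
    (sub_add_cancel 1 x)
  simp only [smul_eq_mul, mul_zero, mul_one, zero_add, exp_zero] at h
  linarith

section

variable {Ω : Type*} [MeasurableSpace Ω] {μ : Measure Ω}

theorem integral_comp_eq_sum_measureReal_preimage {Γ : Type*} [Fintype Γ] [MeasurableSpace Γ]
    [MeasurableSingletonClass Γ] [IsFiniteMeasure μ] {Y : Ω → Γ} (hY : Measurable Y)
    (f : Γ → ℝ) :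
    ∫ ω, f (Y ω) ∂μ = ∑ γ, μ.real (Y ⁻¹' {γ}) * f γ := by
  rw [← integral_map hY.aemeasurable (measurable_of_countable f).aestronglyMeasurable,
    integral_fintype Integrable.of_finite]
  simp only [map_measureReal_apply hY (measurableSet_singleton _), smul_eq_mul]

theorem mgf_one_le_exp_of_mem_Icc [IsProbabilityMeasure μ] {X : Ω → ℝ} (hX : Measurable X)
    (hX01 : ∀ ω, X ω ∈ Set.Icc (0 : ℝ) 1) :
    mgf X μ 1 ≤ exp ((exp 1 - 1) * μ[X]) := by
  have hXint : Integrable X μ :=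
    .of_bound hX.aestronglyMeasurable 1 (.of_forall fun ω => by
      rw [Real.norm_of_nonneg (hX01 ω).1]; exact (hX01 ω).2)
  calc mgf X μ 1 = ∫ ω, exp (X ω) ∂μ := by simp only [mgf, one_mul]
    _ ≤ ∫ ω, 1 + (exp 1 - 1) * X ω ∂μ :=
        integral_mono (.of_bound (by fun_prop) (exp 1) (.of_forall fun ω => by
            rw [Real.norm_of_nonneg (exp_pos _).le]; exact exp_le_exp.2 (hX01 ω).2))
          ((integrable_const 1).add (hXint.const_mul _))
          fun ω => exp_le_one_add_mul_of_mem_Icc (hX01 ω)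
    _ = 1 + (exp 1 - 1) * μ[X] := by
        rw [integral_add (integrable_const 1) (hXint.const_mul _), integral_const_mul]
        simp
    _ ≤ exp ((exp 1 - 1) * μ[X]) := by linarith [add_one_le_exp ((exp 1 - 1) * μ[X])]

theorem ProbabilityTheory.iIndepFun.measureReal_sum_ge_le_exp {ι : Type*} [Fintype ι]
    {X : ι → Ω → ℝ} (hindep : iIndepFun X μ) (hmeas : ∀ i, Measurable (X i))
    (hX01 : ∀ i ω, X i ω ∈ Set.Icc (0 : ℝ) 1) {a : ℝ} (hmean : ∀ i, μ[X i] ≤ a) (c : ℝ) :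
    μ.real {ω | c * Fintype.card ι ≤ ∑ i, X i ω} ≤
      exp (-(c - exp 1 * a) * Fintype.card ι) := by
  have := hindep.isProbabilityMeasure
  have hmgf : ∀ i, mgf (X i) μ 1 ≤ exp (exp 1 * a) := fun i => by
    have hmean_nonneg : 0 ≤ μ[X i] := integral_nonneg fun ω => (hX01 i ω).1
    refine (mgf_one_le_exp_of_mem_Icc (hmeas i) (hX01 i)).trans (exp_le_exp.2 ?_)
    nlinarith [hmean i, exp_pos 1]
  have hint : Integrable (fun ω => exp (1 * (∑ i, X i) ω)) μ :=
    .of_bound (by fun_prop) (exp (Fintype.card ι)) (.of_forall fun ω => by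
      rw [Real.norm_of_nonneg (exp_pos _).le, one_mul, Finset.sum_apply]
      refine exp_le_exp.2 ((Finset.sum_le_sum fun i _ => (hX01 i ω).2).trans ?_)
      simp)
  calc μ.real {ω | c * Fintype.card ι ≤ ∑ i, X i ω}
      ≤ exp (-1 * (c * Fintype.card ι)) * mgf (∑ i, X i) μ 1 := by
        simpa only [Finset.sum_apply] using measure_ge_le_exp_mul_mgf _ zero_le_one hint
    _ ≤ exp (-1 * (c * Fintype.card ι)) * exp (exp 1 * a) ^ Fintype.card ι := by
        rw [hindep.mgf_sum hmeas]
        gcongr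
        calc ∏ i, mgf (X i) μ 1 ≤ ∏ _i : ι, exp (exp 1 * a) :=
              Finset.prod_le_prod (fun i _ => mgf_nonneg) fun i _ => hmgf i
          _ = exp (exp 1 * a) ^ Fintype.card ι := by simp
    _ = exp (-(c - exp 1 * a) * Fintype.card ι) := by
        rw [← exp_nat_mul, ← exp_add]; ring_nf

theorem measure_iInter_compl_pos_of_sum_measureReal_lt_one [IsProbabilityMeasure μ]
    {ι : Type*} [Fintype ι] {B : ι → Set Ω} (hB : ∀ i, MeasurableSet (B i))
    (h : ∑ i, μ.real (B i) < 1) :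
    0 < μ (⋂ i, (B i)ᶜ) := by
  have hpos : 0 < μ.real (⋃ i, B i)ᶜ := by
    rw [probReal_compl_eq_one_sub (.iUnion hB)]
    linarith [measureReal_iUnion_fintype_le (μ := μ) B]
  rw [← Set.compl_iUnion]
  exact (ENNReal.toReal_pos_iff.1 hpos).1

end

theorem reduction_to_n_sq_codes_general
    {Γ : Type} [Fintype Γ] [MeasurableSpace Γ]
    [MeasurableSingletonClass Γ]
    {S : Type} [Fintype S]
    (n : ℕ) (hn : 0 < n)
    (Pe : Γ → (Fin n → S) → ℝ) (hPe : ∀ γ s, Pe γ s ∈ Set.Icc (0:ℝ) 1)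
    (pG : Γ → ℝ)
    (lam : ℝ)
    (hbound : ∀ s : Fin n → S, ∑ γ, pG γ * Pe γ s ≤ lam)
    {Ω : Type*} [MeasurableSpace Ω] (P : Measure Ω) [IsProbabilityMeasure P]
    (G : Fin (n ^ 2) → Ω → Γ)
    (hmeas : ∀ m, Measurable (G m))
    (hindep : iIndepFun G P)
    (hdist : ∀ m γ, (P {ω | G m ω = γ}).toReal = pG γ)
    (hlarge : (Fintype.card S : ℝ) ^ n *
        Real.exp (-(3 * lam - Real.exp 1 * lam) * (n ^ 2 : ℕ)) < 1) :
    0 < P {ω | ∀ s : Fin n → S,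
        (1 / ((n ^ 2 : ℕ) : ℝ)) * ∑ m, Pe (G m ω) s ≤ 3 * lam} ∧
      ∃ γs : Fin (n ^ 2) → Γ, ∀ s : Fin n → S,
        (1 / ((n ^ 2 : ℕ) : ℝ)) * ∑ m, Pe (γs m) s ≤ 3 * lam := by
  let bad : (Fin n → S) → Set Ω := fun s => {ω | 3 * lam * (n ^ 2 : ℕ) ≤ ∑ m, Pe (G m ω) s}
  have hPeG_meas : ∀ s m, Measurable ((Pe · s) ∘ G m) := fun s m =>
    (measurable_of_countable _).comp (hmeas m)
  have hbad : ∀ s, P.real (bad s) ≤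
      Real.exp (-(3 * lam - Real.exp 1 * lam) * (n ^ 2 : ℕ)) := fun s => by
    have hmean : ∀ m, P[(Pe · s) ∘ G m] ≤ lam := fun m =>
      (integral_comp_eq_sum_measureReal_preimage (hmeas m) (Pe · s)).trans_le
        ((Finset.sum_congr rfl fun γ _ => congrArg (· * Pe γ s) (hdist m γ)).trans_le (hbound s))
    have hindep_s : iIndepFun (fun m => (Pe · s) ∘ G m) P :=
      hindep.comp _ fun _ => measurable_of_countable _
    have := hindep_s.measureReal_sum_ge_le_exp (hPeG_meas s) (fun m ω => hPe _ s) hmean (3 * lam)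
    rwa [Fintype.card_fin] at this
  have hsum : ∑ s, P.real (bad s) < 1 := by
    refine lt_of_le_of_lt ((Finset.sum_le_sum fun s _ => hbad s).trans_eq ?_) hlarge
    simp
  have hgood_sub : ⋂ s, (bad s)ᶜ ⊆ {ω | ∀ s : Fin n → S,
      (1 / ((n ^ 2 : ℕ) : ℝ)) * ∑ m, Pe (G m ω) s ≤ 3 * lam} := fun ω hω s => by
    have hω := Set.mem_iInter.1 hω s
    simp only [bad, Set.mem_compl_iff, Set.mem_ofPred_eq, not_le] at hω
    rw [one_div, inv_mul_le_iff₀ (by positivity)]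
    linarith
  have hgood := (measure_iInter_compl_pos_of_sum_measureReal_lt_one
    (fun s => measurableSet_le measurable_const (Finset.measurable_sum _ fun m _ => hPeG_meas s m))
    hsum).trans_le (measure_mono hgood_sub)
  obtain ⟨ω, hω⟩ := nonempty_of_measure_ne_zero hgood.ne'
  exact ⟨hgood, _, hω⟩

/-- Reduction of a random code to `n²` component codes (Lemma `n^2`):
with positive probability an i.i.d. sample of `n²` component codes has
average error at most `3λ` for every state sequence, and hence such a
selection exists. -/
theorem reduction_to_n_sq_codes
    {Γ : Type} [Fintype Γ] [Nonempty Γ] [MeasurableSpace Γ]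
    [MeasurableSingletonClass Γ]
    {S : Type} [Fintype S] [Nonempty S]
    (n : ℕ) (hn : 0 < n)
    (Pe : Γ → (Fin n → S) → ℝ) (hPe : ∀ γ s, Pe γ s ∈ Set.Icc (0:ℝ) 1)
    (pG : Γ → ℝ) (hpG : ∀ γ, 0 ≤ pG γ) (hpG1 : ∑ γ, pG γ = 1)
    (lam : ℝ) (hlam : lam ∈ Set.Ioo (0:ℝ) 1)
    (hbound : ∀ s : Fin n → S, ∑ γ, pG γ * Pe γ s ≤ lam)
    {Ω : Type*} [MeasurableSpace Ω] (P : Measure Ω) [IsProbabilityMeasure P]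
    (G : Fin (n ^ 2) → Ω → Γ)
    (hmeas : ∀ m, Measurable (G m))
    (hindep : iIndepFun G P)
    (hdist : ∀ m γ, (P {ω | G m ω = γ}).toReal = pG γ)
    (hlarge : (Fintype.card S : ℝ) ^ n *
        Real.exp (-(3 * lam - Real.exp 1 * lam) * (n ^ 2 : ℕ)) < 1) :
    0 < P {ω | ∀ s : Fin n → S,
        (1 / ((n ^ 2 : ℕ) : ℝ)) * ∑ m, Pe (G m ω) s ≤ 3 * lam} ∧
      ∃ γs : Fin (n ^ 2) → Γ, ∀ s : Fin n → S,
        (1 / ((n ^ 2 : ℕ) : ℝ)) * ∑ m, Pe (γs m) s ≤ 3 * lam :=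
  reduction_to_n_sq_codes_general n hn Pe hPe pG lam hbound P G hmeas hindep hdist hlarge
end
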